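/- arXiv:2202.11795 — 2 statements merged into one kernel-verified Lean document; each statement's English description precedes it below -/
import Mathlib

section
/- For every δ ∈ (0, 1/2.4], the binary relative entropy satisfies kl(1−δ, δ) ≥ ln(1/(2.4δ)). -/
/-!
With `g δ = kl(1 - δ, δ) + log δ + log (12/5) = 2δ log δ + (1 - 2δ) log (1 - δ) + log (12/5)`
the claim is `g ≥ 0`. Since `(1 - 2δ) log (1 - δ) = 2u log u - log u` for `u = 1 - δ`, `g` is a
nonnegative combination of the convex functions `x log x` and `-log x`, so it lies above its
tangent lines. At `δ = 1/4` and `δ = 1/3` the values are `log (27/25) / 2` and `log (128/125) / 3`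
and the slopes are `4/3 - 2 log 3 < 0` and `3/2 - 2 log 2 > 0`; the first tangent stays positive
up to `δ = 7/25`, the second from there on.
-/

open Real

theorem Real.log_le_log_add_sub_div {x c : ℝ} (hx : 0 < x) (hc : 0 < c) :
    log x ≤ log c + (x - c) / c := by
  have h := log_le_sub_one_of_pos (div_pos hx hc)
  rw [log_div hx.ne' hc.ne', div_sub_one hc.ne'] at h
  linarith

theorem Real.mul_log_add_mul_sub_le_mul_log {x c : ℝ} (hx : 0 < x) (hc : 0 < c) :
    c * log c + (log c + 1) * (x - c) ≤ x * log x := by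
  have h := mul_le_mul_of_nonneg_left (log_le_log_add_sub_div hc hx) hx.le
  rw [mul_add, mul_div_cancel₀ _ hx.ne'] at h
  linarith

noncomputable def klOneSubAddLog (δ : ℝ) : ℝ := 2 * δ * log δ + (1 - 2 * δ) * log (1 - δ)

theorem klOneSubAddLog_tangent_le {δ c : ℝ} (hδ₀ : 0 < δ) (hδ₁ : δ < 1) (hc₀ : 0 < c)
    (hc₁ : c < 1) :
    klOneSubAddLog c + (2 * log (c / (1 - c)) + 1 / (1 - c)) * (δ - c) ≤ klOneSubAddLog δ := by
  have h₁ := mul_log_add_mul_sub_le_mul_log hδ₀ hc₀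
  have h₂ := mul_log_add_mul_sub_le_mul_log (sub_pos.2 hδ₁) (sub_pos.2 hc₁)
  have h₃ := log_le_log_add_sub_div (sub_pos.2 hδ₁) (sub_pos.2 hc₁)
  rw [show (1 - δ - (1 - c)) / (1 - c) = (c - δ) * (1 / (1 - c)) by ring] at h₃
  rw [klOneSubAddLog, klOneSubAddLog, log_div hc₀.ne' (sub_pos.2 hc₁).ne']
  linear_combination 2 * h₁ + 2 * h₂ + h₃

theorem klOneSubAddLog_quarter_add_log :
    klOneSubAddLog (1 / 4) + log (12 / 5) = log (27 / 25) / 2 := by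
  rw [show (27 / 25 : ℝ) = (1 / 4) * (3 / 4) * (12 / 5) ^ 2 by norm_num,
    log_mul (by norm_num) (by norm_num), log_mul (by norm_num) (by norm_num), log_pow,
    klOneSubAddLog]
  norm_num
  ring

theorem klOneSubAddLog_third_add_log :
    klOneSubAddLog (1 / 3) + log (12 / 5) = log (128 / 125) / 3 := by
  rw [show (128 / 125 : ℝ) = (1 / 3) ^ 2 * (2 / 3) * (12 / 5) ^ 3 by norm_num,
    log_mul (by norm_num) (by norm_num), log_mul (by norm_num) (by norm_num), log_pow, log_pow,
    klOneSubAddLog]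
  norm_num
  ring

theorem klOneSubAddLog_add_log_pos {δ : ℝ} (hδ₀ : 0 < δ) (hδ₁ : δ < 1) :
    0 < klOneSubAddLog δ + log (12 / 5) := by
  have quarter := klOneSubAddLog_tangent_le hδ₀ hδ₁ (c := 1 / 4) (by norm_num) (by norm_num)
  have third := klOneSubAddLog_tangent_le hδ₀ hδ₁ (c := 1 / 3) (by norm_num) (by norm_num)
  rw [show (1 / 4 : ℝ) / (1 - 1 / 4) = 3⁻¹ by norm_num, log_inv] at quarter
  rw [show (1 / 3 : ℝ) / (1 - 1 / 3) = 2⁻¹ by norm_num, log_inv] at third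
  have h27 : 2 / 27 ≤ log (27 / 25) := by
    linarith [one_sub_inv_le_log_of_pos (x := 27 / 25) (by norm_num)]
  have h128 : 3 / 128 ≤ log (128 / 125) := by
    linarith [one_sub_inv_le_log_of_pos (x := 128 / 125) (by norm_num)]
  have hlog3_le : log 3 ≤ log 2 + 1 / 2 := by
    have := log_le_sub_one_of_pos (x := 3 / 2) (by norm_num)
    rw [log_div (by norm_num) (by norm_num)] at this
    linarith
  have hlog2_lt_log3 : log 2 < log 3 := log_lt_log (by norm_num) (by norm_num)
  have hlog2_gt := log_two_gt_d9
  have hlog2_lt := log_two_lt_d9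
  rcases le_or_gt δ (7 / 25) with hδ | hδ
  · linarith [klOneSubAddLog_quarter_add_log,
      mul_le_mul_of_nonneg_left hδ (by linarith : 0 ≤ 2 * log 3 - 4 / 3)]
  · linarith [klOneSubAddLog_third_add_log,
      mul_le_mul_of_nonneg_left hδ.le (by linarith : 0 ≤ 3 / 2 - 2 * log 2)]

/-- For `δ ∈ (0, 1/2.4]`, the binary relative entropy satisfies
`kl(1−δ, δ) ≥ ln(1/(2.4 δ))`, where
`kl(x,y) = x ln(x/y) + (1−x) ln((1−x)/(1−y))`. -/
theorem kl_one_sub_ge (δ : ℝ) (hδ : δ ∈ Set.Ioc (0 : ℝ) (1 / 2.4)) :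
    (1 - δ) * Real.log ((1 - δ) / δ) + (1 - (1 - δ)) * Real.log ((1 - (1 - δ)) / (1 - δ)) ≥
      Real.log (1 / (2.4 * δ)) := by
  obtain ⟨hδ₀, hδ₁⟩ := hδ
  have hδ_lt_one : δ < 1 := hδ₁.trans_lt (by norm_num)
  have h1δ : 0 < 1 - δ := sub_pos.2 hδ_lt_one
  have key := klOneSubAddLog_add_log_pos hδ₀ hδ_lt_one
  rw [klOneSubAddLog] at key
  rw [sub_sub_cancel, log_div h1δ.ne' hδ₀.ne', log_div hδ₀.ne' h1δ.ne', one_div, log_inv,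
    log_mul (by norm_num) hδ₀.ne', show (2.4 : ℝ) = 12 / 5 by norm_num]
  linarith
end

section
/- Let s ≥ 2 be an integer and ε ∈ [0, 1/2]. For the categorical distribution p that is uniform on s outcomes and the categorical distribution q with weights proportional to (e^1 for one distinguished outcome, e^{1−2ε} for each of the other s−1 outcomes), we have KL(p,q) ≤ ((s−1)/s²)(e^{ε} − e^{−ε})² ≤ 8ε²/s. -/
open Finset Real

set_option maxHeartbeats 1000000 in
/-- For `s ≥ 2` and `ε ∈ [0,1/2]`, the KL divergence between the uniform distribution `p`
on `s` outcomes and the distribution `q` with weights proportional to `e` on one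
distinguished outcome `a` and `e^{1−2ε}` on the remaining `s−1` outcomes satisfies
`KL(p,q) ≤ ((s−1)/s²)(e^ε − e^{−ε})² ≤ 8ε²/s`. -/
theorem kl_uniform_vs_gumbel_tilt (s : ℕ) (hs : 2 ≤ s) (ε : ℝ)
    (hε : ε ∈ Set.Icc (0 : ℝ) (1 / 2)) (a : Fin s)
    (q : Fin s → ℝ)
    (hq : ∀ i, q i = (if i = a then Real.exp 1 else Real.exp (1 - 2 * ε)) /
      ((s - 1 : ℝ) * Real.exp (1 - 2 * ε) + Real.exp 1)) :
    (∑ i : Fin s, (1 / (s : ℝ)) * Real.log ((1 / (s : ℝ)) / q i) ≤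
        ((s - 1 : ℝ) / (s : ℝ) ^ 2) * (Real.exp ε - Real.exp (-ε)) ^ 2) ∧
    ((s - 1 : ℝ) / (s : ℝ) ^ 2) * (Real.exp ε - Real.exp (-ε)) ^ 2 ≤ 8 * ε ^ 2 / s := by
  obtain ⟨hε0, hε1⟩ := hε
  have hn : (2 : ℝ) ≤ (s : ℝ) := by exact_mod_cast hs
  have hn0 : (0 : ℝ) < (s : ℝ) := by linarith
  set A := Real.exp ε with hAdef
  have hA0 : 0 < A := Real.exp_pos ε
  have hA1 : 1 ≤ A := Real.one_le_exp hε0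
  have he1 : 0 < Real.exp 1 := Real.exp_pos 1
  have hE : Real.exp (1 - 2 * ε) = Real.exp 1 / A ^ 2 := by
    rw [Real.exp_sub, hAdef, ← Real.exp_nat_mul]
    norm_num [mul_comm]
  have hneg : Real.exp (-ε) = A⁻¹ := Real.exp_neg ε
  have hE0 : 0 < Real.exp (1 - 2 * ε) := Real.exp_pos _
  have hD0 : 0 < ((s : ℝ) - 1) * Real.exp (1 - 2 * ε) + Real.exp 1 := by
    have : (0:ℝ) < (s:ℝ) - 1 := by linarith
    positivity
  have hq0 : ∀ i, 0 < q i := by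
    intro i
    rw [hq i]
    split <;> positivity
  -- step 1 : log x ≤ x - 1
  constructor
  · have step1 : ∑ i : Fin s, (1 / (s : ℝ)) * Real.log ((1 / (s : ℝ)) / q i) ≤
        ∑ i : Fin s, (1 / (s : ℝ)) * ((1 / (s : ℝ)) / q i - 1) := by
      apply Finset.sum_le_sum
      intro i _
      have hx : 0 < (1 / (s : ℝ)) / q i := div_pos (by positivity) (hq0 i)
      have := Real.log_le_sub_one_of_pos hx
      have h1n : 0 ≤ 1 / (s:ℝ) := by positivity
      exact mul_le_mul_of_nonneg_left this h1n
    refine step1.trans_eq ?_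
    have hsum : ∑ i : Fin s, (1 / (s : ℝ)) * ((1 / (s : ℝ)) / q i - 1) =
        (1 / (s : ℝ)) * ((1 / (s : ℝ)) /
          (Real.exp 1 / (((s : ℝ) - 1) * Real.exp (1 - 2 * ε) + Real.exp 1)) - 1) +
        ((s : ℝ) - 1) * ((1 / (s : ℝ)) * ((1 / (s : ℝ)) /
          (Real.exp (1 - 2 * ε) / (((s : ℝ) - 1) * Real.exp (1 - 2 * ε) + Real.exp 1)) - 1)) := by
      rw [← Finset.add_sum_erase _ _ (Finset.mem_univ a)]
      congr 1
      · rw [hq a, if_pos rfl]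
      · rw [Finset.sum_congr rfl (fun i hi => by
          rw [hq i, if_neg (Finset.ne_of_mem_erase hi)]),
          Finset.sum_const, Finset.card_erase_of_mem (Finset.mem_univ a),
          Finset.card_univ, Fintype.card_fin, nsmul_eq_mul]
        congr 1
        have : (1:ℕ) ≤ s := le_trans one_le_two hs
        push_cast [Nat.cast_sub this]
        ring
    rw [hsum, hE, hneg]
    have hA2 : (0:ℝ) < A ^ 2 := by positivity
    field_simp
    ring
  · -- second part
    have hkey : (A - A⁻¹) ^ 2 * A ^ 2 = (A ^ 2 - 1) ^ 2 := by
      field_simp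
    have hub : A ^ 2 ≤ 1 + 2 * ε + 4 * ε ^ 2 := by
      have h2 : |2 * ε| ≤ 1 := by rw [abs_of_nonneg (by linarith)]; linarith
      have := Real.abs_exp_sub_one_sub_id_le h2
      have h3 : Real.exp (2 * ε) - 1 - 2 * ε ≤ (2 * ε) ^ 2 := (abs_le.1 this).2
      have h4 : Real.exp (2 * ε) = A ^ 2 := by
        rw [hAdef, ← Real.exp_nat_mul]; norm_num [mul_comm]
      nlinarith
    have hlb : (1 + ε) ^ 2 ≤ A ^ 2 := by
      have := Real.add_one_le_exp ε
      nlinarith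
    have h8 : (A - A⁻¹) ^ 2 ≤ 8 * ε ^ 2 := by
      have hA2 : (0:ℝ) < A ^ 2 := by positivity
      rw [← mul_le_mul_iff_of_pos_right hA2, hkey]
      have h1 : 0 ≤ A ^ 2 - 1 := by nlinarith
      nlinarith [sq_nonneg ε, sq_nonneg (1 - 2*ε), sq_nonneg (A^2 - 1 - 2*ε)]
    rw [hneg]
    have hc : ((s:ℝ) - 1) / (s:ℝ)^2 ≤ 1 / (s:ℝ) := by
      rw [div_le_div_iff₀ (by positivity) hn0]
      nlinarith
    have hc0 : 0 ≤ ((s:ℝ) - 1) / (s:ℝ)^2 := by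
      have : (0:ℝ) ≤ (s:ℝ) - 1 := by linarith
      positivity
    have t1 := mul_le_mul_of_nonneg_left h8 hc0
    have t2 := mul_le_mul_of_nonneg_right hc (by positivity : (0:ℝ) ≤ 8 * ε^2)
    have heq : (1/(s:ℝ)) * (8 * ε^2) = 8 * ε^2 / s := by ring
    linarith
end
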